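/- The induced augmented tree (X, 𝔈) of a Moran set is a hyperbolic graph: there exists δ ≥ 0 such that ⟨x,y⟩ ≥ min(⟨x,z⟩, ⟨z,y⟩) − δ for all x, y, z ∈ X. -/

import Mathlib

open Metric Set Filter

attribute [local instance] Classical.propDecidable

noncomputable section

namespace MoranPaper

/-- Points of `ℝ^d`. -/
abbrev Pt (d : ℕ) := EuclideanSpace ℝ (Fin d)

/-- `w` is an admissible word: the letter at (0-indexed) position `j`
(corresponding to step `j+1`) lies in `[1, n j]`, where `n j` encodes `n_{j+1}`. -/
def IsWord (n : ℕ → ℕ) (w : List ℕ) : Prop :=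
  ∀ j (h : j < w.length), 1 ≤ w.get ⟨j, h⟩ ∧ w.get ⟨j, h⟩ ≤ n j

/-- The set `D_k` of words of length `k`. -/
def WordsLen (n : ℕ → ℕ) (k : ℕ) : Set (List ℕ) := {w | IsWord n w ∧ w.length = k}

/-- A Moran structure on the data `(J, (n_k), (r_k))`:  a family of sets `J_w`
indexed by words, with `J_∅ = J`, each `J_w` a similar copy of `J`, children
contained in the parent with pairwise disjoint interiors, and prescribed
diameter ratios. -/
structure MoranStructure (d : ℕ) (J : Set (Pt d)) (n : ℕ → ℕ) (r : ℕ → ℝ) where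
  Jset : List ℕ → Set (Pt d)
  root_eq : Jset [] = J
  similar : ∀ w, IsWord n w → ∃ (S : Pt d → Pt d) (c : ℝ), 0 < c ∧
      (∀ x y, dist (S x) (S y) = c * dist x y) ∧ Jset w = S '' J
  nested : ∀ w, IsWord n w → ∀ a, 1 ≤ a → a ≤ n w.length →
      Jset (w ++ [a]) ⊆ Jset w
  disjoint_int : ∀ w, IsWord n w → ∀ a b, 1 ≤ a → a ≤ n w.length →
      1 ≤ b → b ≤ n w.length → a ≠ b →
      interior (Jset (w ++ [a])) ∩ interior (Jset (w ++ [b])) = ∅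
  diam_ratio : ∀ w, IsWord n w → ∀ a, 1 ≤ a → a ≤ n w.length →
      Metric.diam (Jset (w ++ [a])) = r w.length * Metric.diam (Jset w)

/-- Standing hypotheses on the Moran data; `R` plays the role of `r = inf_k r_k > 0`. -/
structure MoranData (d : ℕ) (J : Set (Pt d)) (n : ℕ → ℕ) (r : ℕ → ℝ) (R : ℝ) : Prop where
  dim_pos : 1 ≤ d
  compact : IsCompact J
  int_nonempty : (interior J).Nonempty
  two_le : ∀ k, 2 ≤ n k
  r_pos : ∀ k, 0 < r k
  r_lt_one : ∀ k, r k < 1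
  nr_le : ∀ k, (n k : ℝ) * r k ≤ 1
  R_pos : 0 < R
  R_inf : R = ⨅ k, r k

/-- The Moran set `E = ⋂_k ⋃_{w ∈ D_k} J_w`. -/
def MoranSet {d : ℕ} {J : Set (Pt d)} {n : ℕ → ℕ} {r : ℕ → ℝ}
    (M : MoranStructure d J n r) : Set (Pt d) :=
  ⋂ k, ⋃ w ∈ WordsLen n k, M.Jset w

/-- The product `r_1 ⋯ r_k`. -/
def prodR (r : ℕ → ℝ) (k : ℕ) : ℝ := ∏ j ∈ Finset.range k, r j

/-- The level `X_m`:  `X_0 = {∅}`, and for `m ≥ 1`,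
`X_m = {w : r_1⋯r_k ≤ R^m < r_1⋯r_{k-1}}` where `k` is the length of `w`. -/
def XLevel (n : ℕ → ℕ) (r : ℕ → ℝ) (R : ℝ) (m : ℕ) : Set (List ℕ) :=
  if m = 0 then {([] : List ℕ)}
  else {w | IsWord n w ∧ prodR r w.length ≤ R ^ m ∧ R ^ m < prodR r (w.length - 1)}

/-- The vertex set `X = ⋃_m X_m`. -/
def XV (n : ℕ → ℕ) (r : ℕ → ℝ) (R : ℝ) : Set (List ℕ) := ⋃ m, XLevel n r R m

/-- `v` is the parent (first ancestor) of `u`:  `v` is the initial segment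
of `u` lying one level above `u`. -/
def IsParent (n : ℕ → ℕ) (r : ℕ → ℝ) (R : ℝ) (v u : List ℕ) : Prop :=
  v ≠ u ∧ v <+: u ∧ ∃ m, 1 ≤ m ∧ u ∈ XLevel n r R m ∧ v ∈ XLevel n r R (m - 1)

/-- Vertical edge relation `𝔈_v` (as an unordered relation). -/
def Evert (n : ℕ → ℕ) (r : ℕ → ℝ) (R : ℝ) (u v : List ℕ) : Prop :=
  IsParent n r R u v ∨ IsParent n r R v u

variable {d : ℕ} {J : Set (Pt d)} {n : ℕ → ℕ} {r : ℕ → ℝ}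

/-- Horizontal edge relation `𝔈_h`: distinct words on a common level `X_m`, `m ≥ 1`,
whose Moran pieces intersect. -/
def Ehor (M : MoranStructure d J n r) (R : ℝ) (u v : List ℕ) : Prop :=
  u ≠ v ∧ ∃ m, 1 ≤ m ∧ u ∈ XLevel n r R m ∧ v ∈ XLevel n r R m ∧
    (M.Jset u ∩ M.Jset v).Nonempty

/-- The induced augmented tree `(X, 𝔈)`, `𝔈 = 𝔈_v ∪ 𝔈_h`, as a graph on all words
(words outside `X` are isolated vertices). -/
def AugGraph (M : MoranStructure d J n r) (R : ℝ) : SimpleGraph (List ℕ) where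
  Adj u v := Evert n r R u v ∨ Ehor M R u v
  symm := by
    constructor
    rintro u v (h | ⟨hne, m, hm, hu, hv, hJ⟩)
    · exact Or.inl h.symm
    · exact Or.inr ⟨hne.symm, m, hm, hv, hu, by rwa [Set.inter_comm]⟩
  loopless := by
    constructor
    rintro u ((⟨h, -⟩ | ⟨h, -⟩) | ⟨h, -⟩) <;> exact h rfl

/-- The tree `(X, 𝔈_v)` with only the vertical edges. -/
def TreeGraph (n : ℕ → ℕ) (r : ℕ → ℝ) (R : ℝ) : SimpleGraph (List ℕ) where
  Adj u v := Evert n r R u v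
  symm := ⟨fun _ _ h => h.symm⟩
  loopless := by constructor; rintro u (⟨h, -⟩ | ⟨h, -⟩) <;> exact h rfl

/-- The graph `(X, 𝔈_h)` with only the horizontal edges. -/
def HorGraph (M : MoranStructure d J n r) (R : ℝ) : SimpleGraph (List ℕ) where
  Adj u v := Ehor M R u v
  symm := by
    constructor
    rintro u v ⟨hne, m, hm, hu, hv, hJ⟩
    exact ⟨hne.symm, m, hm, hv, hu, by rwa [Set.inter_comm]⟩
  loopless := by constructor; rintro u ⟨h, -⟩; exact h rfl

/-- Gromov product `⟨x,y⟩ = (d(o,x) + d(o,y) - d(x,y))/2` with respect to a base point `o`. -/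
def gromovD {V : Type*} (G : SimpleGraph V) (o x y : V) : ℝ :=
  ((G.dist o x : ℝ) + (G.dist o y : ℝ) - (G.dist x y : ℝ)) / 2

/-- Condition (H): there is `C' > 0` such that on every level `X_m` (`m ≥ 1`),
two pieces either intersect or are at distance at least `C' R^m`. -/
def CondH (M : MoranStructure d J n r) (R : ℝ) : Prop :=
  ∃ C' : ℝ, 0 < C' ∧ ∀ m, 1 ≤ m → ∀ u ∈ XLevel n r R m, ∀ v ∈ XLevel n r R m,
    (M.Jset u ∩ M.Jset v).Nonempty ∨
    ∀ p ∈ M.Jset u, ∀ q ∈ M.Jset v, C' * R ^ m ≤ dist p q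

/-- `T` is a horizontal connected component: a maximal subset of some level `X_m`
which is connected in the horizontal graph. -/
def IsHCC (M : MoranStructure d J n r) (R : ℝ) (T : Set (List ℕ)) : Prop :=
  ∃ m, T ⊆ XLevel n r R m ∧ ((HorGraph M R).induce T).Connected ∧
    ∀ T', T ⊆ T' → T' ⊆ XLevel n r R m → ((HorGraph M R).induce T').Connected → T' = T

/-- The common suffix set `Σ_m` of the level `X_m`: words `w` with `uw ∈ X_{m+1}`
for (some, equivalently all) `u ∈ X_m`. -/
def SigmaSet (n : ℕ → ℕ) (r : ℕ → ℝ) (R : ℝ) (m : ℕ) : Set (List ℕ) :=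
  {w | ∃ u ∈ XLevel n r R m, u ++ w ∈ XLevel n r R (m + 1)}

/-- The offspring set `TΣ_m ⊆ X_{m+1}` of a set `T ⊆ X_m`. -/
def TSigma (n : ℕ → ℕ) (r : ℕ → ℝ) (R : ℝ) (m : ℕ) (T : Set (List ℕ)) : Set (List ℕ) :=
  {x | ∃ u ∈ T, ∃ w ∈ SigmaSet n r R m, x = u ++ w}

/-- The augmented tree is rearrangeable:  horizontal connected components have
uniformly bounded cardinality, and for every horizontal connected component `T ⊆ X_m`
with `#T = b`, the offspring set `TΣ_m` can be partitioned into `b` groups (indexed by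
the elements of `T`), each group being a union of horizontal connected components and
having exactly `#Σ_m` elements. -/
def Rearrangeable (M : MoranStructure d J n r) (R : ℝ) : Prop :=
  (∃ L : ℕ, ∀ T, IsHCC M R T → T.Finite ∧ T.ncard ≤ L) ∧
  ∀ m T, T ⊆ XLevel n r R m → IsHCC M R T →
    ∃ g : List ℕ → List ℕ,
      (∀ x ∈ TSigma n r R m T, g x ∈ T) ∧
      (∀ Z, IsHCC M R Z → Z ⊆ TSigma n r R m T → ∀ x ∈ Z, ∀ y ∈ Z, g x = g y) ∧
      (∀ i ∈ T, {x ∈ TSigma n r R m T | g x = i}.ncard = (SigmaSet n r R m).ncard)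

/-- `C` is a (topological) connected component of `A`. -/
def IsRelCC {α : Type*} [TopologicalSpace α] (C A : Set α) : Prop :=
  ∃ x ∈ A, C = connectedComponentIn A x

/-- Condition (v): there is `L` such that any `T ⊆ D_{k-1}` for which `⋃_{i∈T} J_i`
is a connected component of `⋃_{i∈D_{k-1}} J_i` satisfies `#T ≤ L`. -/
def CondV (M : MoranStructure d J n r) : Prop :=
  ∃ L : ℕ, ∀ k, 1 ≤ k → ∀ T ⊆ WordsLen n (k - 1),
    IsRelCC (⋃ i ∈ T, M.Jset i) (⋃ i ∈ WordsLen n (k - 1), M.Jset i) →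
    T.Finite ∧ T.ncard ≤ L

/-- Condition (vi): for any such `T` (with `#T = b`), the connected components of
`⋃_{i∈T} ⋃_{j=1}^{n_k} J_{ij}` can be partitioned into `b` groups (indexed by the
elements of `T`) so that the union of the components in each group is a union of
exactly `n_k` of the sets `J_{ij}`. -/
def CondVI (M : MoranStructure d J n r) : Prop :=
  ∀ k, 1 ≤ k → ∀ T ⊆ WordsLen n (k - 1),
    IsRelCC (⋃ i ∈ T, M.Jset i) (⋃ i ∈ WordsLen n (k - 1), M.Jset i) →
    ∃ f : Set (Pt d) → List ℕ,
      (∀ C, IsRelCC C (⋃ u ∈ T, ⋃ j ∈ Set.Icc 1 (n (k - 1)), M.Jset (u ++ [j])) → f C ∈ T) ∧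
      ∀ i ∈ T, ∃ W : Finset (List ℕ × ℕ),
        (∀ p ∈ W, p.1 ∈ T ∧ 1 ≤ p.2 ∧ p.2 ≤ n (k - 1)) ∧
        W.card = n (k - 1) ∧
        (⋃ C ∈ {C | IsRelCC C (⋃ u ∈ T, ⋃ j ∈ Set.Icc 1 (n (k - 1)), M.Jset (u ++ [j]))
            ∧ f C = i}, C)
          = ⋃ p ∈ W, M.Jset (p.1 ++ [p.2])

/-- A geodesic ray of the induced augmented tree: `u_m ∈ X_m` and `u_m = (u_{m+1})⁻¹`. -/
def IsRay (n : ℕ → ℕ) (r : ℕ → ℝ) (R : ℝ) (u : ℕ → List ℕ) : Prop :=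
  (∀ m, u m ∈ XLevel n r R m) ∧ ∀ m, IsParent n r R (u m) (u (m + 1))

/-- Geodesic rays as a type. -/
def MRay (n : ℕ → ℕ) (r : ℕ → ℝ) (R : ℝ) := {u : ℕ → List ℕ // IsRay n r R u}

/-- `t(ξ,η) = liminf_m ⟨u_m, v_m⟩`, valued in `EReal`. -/
def tLim {V : Type*} (G : SimpleGraph V) (o : V) (u v : ℕ → V) : EReal :=
  Filter.liminf (fun m => ((gromovD G o (u m) (v m) : ℝ) : EReal)) Filter.atTop

/-- `R ^ t` for `t ∈ EReal`, with the convention `R ^ ∞ = 0`. -/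
def rpowE (R : ℝ) (t : EReal) : ℝ := if t = ⊤ then 0 else R ^ t.toReal

/-- The hyperbolic boundary of the induced augmented tree: equivalence classes of
geodesic rays, two rays being equivalent when `t(ξ,η) = ∞`. -/
def MBoundary (M : MoranStructure d J n r) (R : ℝ) :=
  Quot (fun ξ η : MRay n r R => tLim (AugGraph M R) [] ξ.1 η.1 = ⊤)

/-- The class of a ray in the hyperbolic boundary. -/
def mkB (M : MoranStructure d J n r) (R : ℝ) (ξ : MRay n r R) : MBoundary M R :=
  Quot.mk _ ξ

/-- The metric `ρ_a` on the hyperbolic boundary: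
`ρ_a(ξ̄,η̄) = exp(-a · inf{t(ξ,η) : ξ ∈ ξ̄, η ∈ η̄})` for distinct classes, and `0` otherwise. -/
def mrho (M : MoranStructure d J n r) (R a : ℝ) (p q : MBoundary M R) : ℝ :=
  if p = q then 0
  else Real.exp (-a * (sInf {s : EReal | ∃ ξ η : MRay n r R,
    mkB M R ξ = p ∧ mkB M R η = q ∧ s = tLim (AugGraph M R) [] ξ.1 η.1}).toReal)

/-- An abstract augmented tree in the sense of Kaimanovich: a rooted tree (encoded
by a parent map and a level function) together with a symmetric horizontal edge
relation `Eh` joining distinct vertices of a common level whose parents are equal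
or horizontally joined. -/
structure AugmentedTree (V : Type*) where
  root : V
  parent : V → V
  lvl : V → ℕ
  lvl_root : lvl root = 0
  lvl_parent : ∀ x, x ≠ root → lvl (parent x) + 1 = lvl x
  Eh : V → V → Prop
  Eh_symm : ∀ x y, Eh x y → Eh y x
  Eh_ne : ∀ x y, Eh x y → x ≠ y
  Eh_lvl : ∀ x y, Eh x y → lvl x = lvl y
  Eh_parent : ∀ x y, Eh x y → parent x = parent y ∨ Eh (parent x) (parent y)

namespace AugmentedTree

variable {V : Type*} (T : AugmentedTree V)

/-- The vertical (tree) edge relation. -/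
def Ev (x y : V) : Prop :=
  (x ≠ T.root ∧ T.parent x = y) ∨ (y ≠ T.root ∧ T.parent y = x)

/-- The graph `(X, 𝔈)`, `𝔈 = 𝔈_v ∪ 𝔈_h`. -/
def graph : SimpleGraph V where
  Adj x y := x ≠ y ∧ (T.Ev x y ∨ T.Eh x y)
  symm := by
    constructor
    rintro x y ⟨hne, h | h⟩
    · exact ⟨hne.symm, Or.inl h.symm⟩
    · exact ⟨hne.symm, Or.inr (T.Eh_symm x y h)⟩
  loopless := ⟨fun _ h => h.1 rfl⟩

/-- Gromov product `⟨x,y⟩ = (|x| + |y| - d(x,y))/2` (one has `d(o,x) = |x| = lvl x`). -/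
def gromov (x y : V) : ℝ :=
  ((T.lvl x : ℝ) + (T.lvl y : ℝ) - (T.graph.dist x y : ℝ)) / 2

/-- Gromov hyperbolicity. -/
def Hyperbolic : Prop :=
  ∃ δ : ℝ, 0 ≤ δ ∧ ∀ x y z : V,
    min (T.gromov x z) (T.gromov z y) - δ ≤ T.gromov x y

/-- A geodesic ray from the root: `x_0 = o` and `x_m = (x_{m+1})⁻¹`. -/
def IsRayT (x : ℕ → V) : Prop := x 0 = T.root ∧ ∀ m, T.parent (x (m + 1)) = x m

/-- Geodesic rays from the root, as a type. -/
def Ray := {x : ℕ → V // T.IsRayT x}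

/-- `t(ξ,η) = liminf_m ⟨x_m, y_m⟩`, valued in `EReal`. -/
def tvalT (ξ η : T.Ray) : EReal :=
  Filter.liminf (fun m => ((T.gromov (ξ.1 m) (η.1 m) : ℝ) : EReal)) Filter.atTop

/-- The hyperbolic boundary: classes of geodesic rays, two rays being equivalent
when `t(ξ,η) = ∞`. -/
def Boundary := Quot (fun ξ η : T.Ray => T.tvalT ξ η = ⊤)

/-- The class of a ray in the boundary. -/
def mkBd (ξ : T.Ray) : T.Boundary := Quot.mk _ ξ

/-- The metric `ρ_a` on the hyperbolic boundary. -/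
def rho (a : ℝ) (p q : T.Boundary) : ℝ :=
  if p = q then 0
  else Real.exp (-a * (sInf {s : EReal | ∃ ξ η : T.Ray,
    T.mkBd ξ = p ∧ T.mkBd η = q ∧ s = T.tvalT ξ η}).toReal)

end AugmentedTree

end MoranPaper

/-
A vertex `x ∈ X_a` is at distance `a` from the root, and a geodesic from `x ∈ X_a` to `y ∈ X_b`
climbs to some level `s`, runs horizontally for `q` steps between the ancestors of `x` and `y`
there, and descends; hence `⟨x, y⟩ ≤ s - q / 2`, while conversely any horizontal walk of length
`q` between the ancestors on level `s` gives `⟨x, y⟩ ≥ s - q / 2`.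

The pieces met by a horizontal walk of length `q` on level `s` lie in a ball of radius about
`q R^s`. Moving up `t ≈ q / 2 + c` levels, with `R^t (q + 1) ≤ 1`, that ball becomes comparable to
the pieces of level `s - t`; these have disjoint interiors and contain balls proportional to their
size, so by volume packing the ancestors there are joined by a walk of length at most a constant
`K`. Thus for every pair there is a level `s ≥ ⟨x, y⟩ - c` on which their ancestors are `K`-close.
For `x, y, z`, on the smaller of the levels obtained for `(x, z)` and `(z, y)` the ancestors of `x`
and `y` are `2K`-close, whence `⟨x, y⟩ ≥ min (⟨x, z⟩, ⟨z, y⟩) - c - K`.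
-/

namespace MoranPaper

section Similarity

variable {E : Type*} [NormedAddCommGroup E] [NormedSpace ℝ E] [StrictConvexSpace ℝ E]
  [FiniteDimensional ℝ E] {S : E → E} {c : ℝ}

lemma exists_affineIsometryEquiv_of_dist_eq_mul (hc : 0 < c)
    (hS : ∀ x y, dist (S x) (S y) = c * dist x y) :
    ∃ e : E ≃ᵃⁱ[ℝ] E, ∀ x, S x = c • e x := by
  have hiso : Isometry fun x => c⁻¹ • S x := Isometry.of_dist_eq fun x y => by
    rw [dist_smul₀, hS, Real.norm_eq_abs, abs_inv, abs_of_pos hc, inv_mul_cancel_left₀ hc.ne']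
  have : Inhabited E := ⟨0⟩
  refine ⟨hiso.affineIsometryOfStrictConvexSpace.toAffineIsometryEquiv rfl, fun x => ?_⟩
  change S x = c • c⁻¹ • S x
  rw [smul_inv_smul₀ hc.ne']

lemma image_ball_of_dist_eq_mul (hc : 0 < c) (hS : ∀ x y, dist (S x) (S y) = c * dist x y)
    (x : E) (ρ : ℝ) : S '' ball x ρ = ball (S x) (c * ρ) := by
  obtain ⟨e, he⟩ := exists_affineIsometryEquiv_of_dist_eq_mul hc hS
  have hS' : S = (c • ·) ∘ e := funext he
  rw [hS', Set.image_comp, show ⇑e '' _ = _ from e.toIsometryEquiv.image_ball x ρ,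
    Set.image_smul, _root_.smul_ball hc.ne', Real.norm_eq_abs, abs_of_pos hc]
  rfl

lemma diam_image_of_dist_eq_mul (hc : 0 < c) (hS : ∀ x y, dist (S x) (S y) = c * dist x y)
    (A : Set E) : diam (S '' A) = c * diam A := by
  obtain ⟨e, he⟩ := exists_affineIsometryEquiv_of_dist_eq_mul hc hS
  have hS' : S = (c • ·) ∘ e := funext he
  rw [hS', Set.image_comp, Set.image_smul, diam_smul₀, e.diam_image, Real.norm_eq_abs,
    abs_of_pos hc]

end Similarity

open MeasureTheory in
lemma card_mul_pow_le_of_pairwiseDisjoint_ball {E : Type*} [NormedAddCommGroup E]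
    [NormedSpace ℝ E] [MeasurableSpace E] [BorelSpace E] [FiniteDimensional ℝ E] [Nontrivial E]
    {ι : Type*} (F : Finset ι) (c : ι → E) {ρ Q : ℝ} {p : E} (hρ : 0 ≤ ρ) (hQ : 0 ≤ Q)
    (hdisj : (F : Set ι).PairwiseDisjoint fun i => ball (c i) ρ)
    (hsub : ∀ i ∈ F, ball (c i) ρ ⊆ closedBall p Q) :
    F.card * ρ ^ Module.finrank ℝ E ≤ Q ^ Module.finrank ℝ E := by
  set μ : Measure E := Measure.addHaar
  have hB0 : μ (ball 0 1) ≠ 0 := (measure_ball_pos μ _ one_pos).ne'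
  have hBtop : μ (ball 0 1) ≠ ⊤ := measure_ball_lt_top.ne
  have hvol : (F.card : ENNReal) * ENNReal.ofReal (ρ ^ Module.finrank ℝ E) * μ (ball 0 1) ≤
      ENNReal.ofReal (Q ^ Module.finrank ℝ E) * μ (ball 0 1) := by
    calc (F.card : ENNReal) * ENNReal.ofReal (ρ ^ Module.finrank ℝ E) * μ (ball 0 1)
        = ∑ i ∈ F, μ (ball (c i) ρ) := by
          simp [Measure.addHaar_ball μ _ hρ, Finset.sum_const, nsmul_eq_mul, mul_assoc]
      _ = μ (⋃ i ∈ F, ball (c i) ρ) :=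
          (measure_biUnion_finset hdisj fun i _ => measurableSet_ball).symm
      _ ≤ μ (closedBall p Q) := measure_mono (Set.iUnion₂_subset hsub)
      _ = ENNReal.ofReal (Q ^ Module.finrank ℝ E) * μ (ball 0 1) :=
          Measure.addHaar_closedBall μ p hQ
  rw [ENNReal.mul_le_mul_iff_left hB0 hBtop, ← ENNReal.ofReal_natCast,
    ← ENNReal.ofReal_mul (Nat.cast_nonneg _),
    ENNReal.ofReal_le_ofReal_iff (pow_nonneg hQ _)] at hvol
  exact hvol

/-- `t ≈ q / 2` suffices because `(q + 1) R^(q/2)` is bounded. -/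
lemma exists_pow_mul_succ_le_one {R : ℝ} (hR0 : 0 ≤ R) (hR1 : R < 1) :
    ∃ c : ℕ, ∀ q : ℕ, ∃ t : ℕ, R ^ t * (q + 1) ≤ 1 ∧ 2 * t ≤ q + c := by
  have hlim : Filter.Tendsto (fun k : ℕ => (2 * k + 1) * R ^ k) Filter.atTop (nhds 0) := by
    simpa [add_mul, mul_assoc] using
      ((tendsto_self_mul_const_pow_of_lt_one hR0 hR1).const_mul 2).add
        (tendsto_pow_atTop_nhds_zero_of_lt_one hR0 hR1)
  obtain ⟨C, hC⟩ := hlim.bddAbove_range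
  obtain ⟨t₀, ht₀⟩ := exists_pow_lt_of_lt_one (inv_pos.mpr (lt_max_of_lt_right one_pos)) hR1
  refine ⟨2 * t₀ + 1, fun q => ⟨(q + 1) / 2 + t₀, ?_, by omega⟩⟩
  set k := (q + 1) / 2
  have hq : (q : ℝ) + 1 ≤ 2 * k + 1 := by exact_mod_cast (by omega : q + 1 ≤ 2 * k + 1)
  have hk : (2 * k + 1) * R ^ k ≤ max C 1 := (hC ⟨k, rfl⟩).trans (le_max_left _ _)
  calc R ^ (k + t₀) * (q + 1) = R ^ t₀ * ((q + 1) * R ^ k) := by ring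
    _ ≤ R ^ t₀ * ((2 * k + 1) * R ^ k) := by gcongr
    _ ≤ R ^ t₀ * max C 1 := mul_le_mul_of_nonneg_left hk (pow_nonneg hR0 t₀)
    _ ≤ 1 := by
        rw [← le_div_iff₀ (lt_max_of_lt_right one_pos), one_div]
        exact ht₀.le

variable {d : ℕ} {J : Set (Pt d)} {n : ℕ → ℕ} {r : ℕ → ℝ} {R : ℝ}

lemma prodR_zero (r : ℕ → ℝ) : prodR r 0 = 1 := Finset.prod_range_zero _

lemma prodR_succ (r : ℕ → ℝ) (k : ℕ) : prodR r (k + 1) = prodR r k * r k :=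
  Finset.prod_range_succ _ _

lemma IsWord.of_prefix {u x : List ℕ} (hx : IsWord n x) (hu : u <+: x) : IsWord n u :=
  fun j hj => by
    simpa only [List.get_eq_getElem, hu.getElem] using hx j (hj.trans_le hu.length_le)

lemma isWord_append_singleton {w : List ℕ} {a : ℕ} :
    IsWord n (w ++ [a]) ↔ IsWord n w ∧ 1 ≤ a ∧ a ≤ n w.length := by
  refine ⟨fun h => ⟨h.of_prefix (List.prefix_append _ _), ?_⟩, ?_⟩
  · simpa using h w.length (by simp)
  · rintro ⟨hw, ha⟩ j hj
    rcases (Nat.lt_succ_iff.mp (by simpa using hj)).lt_or_eq with hj | rfl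
    · simpa [List.getElem_append_left hj] using hw j hj
    · simpa using ha

def levelLength (r : ℕ → ℝ) (R : ℝ) (m : ℕ) : ℕ := sInf {j | prodR r j ≤ R ^ m}

/-- The initial segment of `x ∈ X_m` lying in `X_s`, i.e. the paper's `x⁻⁽ᵐ⁻ˢ⁾`. -/
def ancestor (r : ℕ → ℝ) (R : ℝ) (s : ℕ) (x : List ℕ) : List ℕ :=
  x.take (levelLength r R s)

lemma levelLength_zero : levelLength r R 0 = 0 :=
  Nat.sInf_eq_zero.mpr (Or.inl (by simp [prodR_zero]))

lemma ancestor_zero (x : List ℕ) : ancestor r R 0 x = [] := by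
  rw [ancestor, levelLength_zero, List.take_zero]

namespace MoranStructure

variable (M : MoranStructure d J n r)

lemma Jset_subset_of_prefix {u x : List ℕ} (hx : IsWord n x) (hu : u <+: x) :
    M.Jset x ⊆ M.Jset u := by
  obtain ⟨t, rfl⟩ := hu
  induction t using List.reverseRecOn with
  | nil => simp
  | append_singleton t a ih =>
    rw [← List.append_assoc] at hx ⊢
    obtain ⟨hw, ha⟩ := isWord_append_singleton.mp hx
    exact (M.nested _ hw a ha.1 ha.2).trans (ih hw)

lemma Jset_nonempty (hJ : J.Nonempty) {w : List ℕ} (hw : IsWord n w) : (M.Jset w).Nonempty := by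
  obtain ⟨S, -, -, -, hSw⟩ := M.similar w hw
  exact hSw ▸ hJ.image S

lemma isBounded_Jset (hJ : IsCompact J) {w : List ℕ} (hw : IsWord n w) :
    Bornology.IsBounded (M.Jset w) := by
  obtain ⟨S, c, hc, hS, hSw⟩ := M.similar w hw
  have hlip : LipschitzWith (Real.toNNReal c) S :=
    LipschitzWith.of_dist_le_mul fun x y => by rw [hS, Real.coe_toNNReal c hc.le]
  exact hSw ▸ (hJ.image hlip.continuous).isBounded

lemma diam_Jset {w : List ℕ} (hw : IsWord n w) :
    diam (M.Jset w) = prodR r w.length * diam J := by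
  induction w using List.reverseRecOn with
  | nil => simp [M.root_eq, prodR_zero]
  | append_singleton t a ih =>
    obtain ⟨ht, ha⟩ := isWord_append_singleton.mp hw
    rw [M.diam_ratio t ht a ha.1 ha.2, ih ht, List.length_append, List.length_singleton,
      prodR_succ]
    ring

lemma disjoint_interior_Jset {u v : List ℕ} (hu : IsWord n u) (hv : IsWord n v)
    (hlen : u.length = v.length) (hne : u ≠ v) :
    Disjoint (interior (M.Jset u)) (interior (M.Jset v)) := by
  induction u using List.reverseRecOn generalizing v with
  | nil => exact absurd (List.length_eq_zero_iff.mp hlen.symm).symm hne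
  | append_singleton u a ih =>
    obtain ⟨v, b, rfl⟩ : ∃ v' b, v = v' ++ [b] := by
      rcases List.eq_nil_or_concat v with rfl | ⟨v', b, rfl⟩
      · simp at hlen
      · exact ⟨v', b, List.concat_eq_append ▸ rfl⟩
    obtain ⟨hu', ha⟩ := isWord_append_singleton.mp hu
    obtain ⟨hv', hb⟩ := isWord_append_singleton.mp hv
    simp only [List.length_append, List.length_singleton, Nat.add_right_cancel_iff] at hlen
    by_cases huv : u = v
    · subst huv
      rw [Set.disjoint_iff_inter_eq_empty]
      exact M.disjoint_int u hu' a b ha.1 ha.2 hb.1 hb.2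
        fun hab => hne (hab ▸ rfl)
    · exact (ih hu' hv' hlen huv).mono (interior_mono (M.nested u hu' a ha.1 ha.2))
        (interior_mono (M.nested v hv' b hb.1 hb.2))

end MoranStructure

lemma horGraph_le_augGraph (M : MoranStructure d J n r) (R : ℝ) : HorGraph M R ≤ AugGraph M R :=
  fun _ _ h => Or.inr h

namespace MoranData

variable (hD : MoranData d J n r R) (M : MoranStructure d J n r)
include hD

lemma R_le (k : ℕ) : R ≤ r k :=
  hD.R_inf ▸ ciInf_le ⟨0, by rintro _ ⟨k, rfl⟩; exact (hD.r_pos k).le⟩ k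

lemma R_lt_one : R < 1 := (hD.R_le 0).trans_lt (hD.r_lt_one 0)

lemma r_le_half (k : ℕ) : r k ≤ 1 / 2 := by
  have h2 : (2 : ℝ) ≤ n k := by exact_mod_cast hD.two_le k
  have := hD.nr_le k
  rw [le_div_iff₀ two_pos]
  nlinarith [hD.r_pos k]

lemma prodR_pos (k : ℕ) : 0 < prodR r k :=
  Finset.prod_pos fun j _ => hD.r_pos j

lemma prodR_strictAnti : StrictAnti (prodR r) :=
  strictAnti_nat_of_succ_lt fun k => by
    rw [prodR_succ]
    exact mul_lt_of_lt_one_right (hD.prodR_pos k) (hD.r_lt_one k)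

lemma prodR_le_half_pow (k : ℕ) : prodR r k ≤ (1 / 2) ^ k := by
  calc prodR r k ≤ ∏ _j ∈ Finset.range k, (1 / 2 : ℝ) :=
        Finset.prod_le_prod (fun j _ => (hD.r_pos j).le) fun j _ => hD.r_le_half j
    _ = (1 / 2) ^ k := by simp

lemma prodR_levelLength_le (m : ℕ) : prodR r (levelLength r R m) ≤ R ^ m := by
  obtain ⟨j, hj⟩ := exists_pow_lt_of_lt_one (pow_pos hD.R_pos m) one_half_lt_one
  exact Nat.sInf_mem (s := {j | prodR r j ≤ R ^ m}) ⟨j, (hD.prodR_le_half_pow j).trans hj.le⟩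

lemma pow_succ_lt_prodR_levelLength (m : ℕ) : R ^ (m + 1) < prodR r (levelLength r R m) := by
  set L := levelLength r R m
  rcases Nat.eq_zero_or_pos L with hL | hL
  · rw [hL, prodR_zero]
    exact pow_lt_one₀ hD.R_pos.le hD.R_lt_one (Nat.succ_ne_zero m)
  have hprev : R ^ m < prodR r (L - 1) :=
    lt_of_not_ge (Nat.notMem_of_lt_sInf (Nat.sub_lt hL one_pos))
  calc R ^ (m + 1) = R ^ m * R := pow_succ R m
    _ < prodR r (L - 1) * r (L - 1) :=
        mul_lt_mul hprev (hD.R_le _) hD.R_pos (hD.prodR_pos _).le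
    _ = prodR r L := by rw [← prodR_succ, Nat.sub_add_cancel hL]

lemma levelLength_strictMono : StrictMono (levelLength r R) :=
  strictMono_nat_of_lt_succ fun m => lt_of_not_ge fun h =>
    ((hD.pow_succ_lt_prodR_levelLength m).trans_le
      ((hD.prodR_strictAnti.antitone h).trans (hD.prodR_levelLength_le (m + 1)))).false

lemma mem_XLevel_iff {m : ℕ} {w : List ℕ} :
    w ∈ XLevel n r R m ↔ IsWord n w ∧ w.length = levelLength r R m := by
  rcases Nat.eq_zero_or_pos m with rfl | hm
  · simp only [XLevel, if_pos, Set.mem_singleton_iff, levelLength_zero, List.length_eq_zero_iff,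
      iff_and_self]
    rintro rfl j hj
    simp at hj
  have hL : 0 < levelLength r R m := levelLength_zero (r := r) (R := R) ▸
    hD.levelLength_strictMono hm
  simp only [XLevel, if_neg hm.ne', Set.mem_ofPred_eq, and_congr_right_iff]
  intro _
  constructor
  · rintro ⟨hle, hlt⟩
    refine le_antisymm (not_lt.mp fun hgt => ?_) (Nat.sInf_le hle)
    exact (hlt.trans_le ((hD.prodR_strictAnti.antitone (Nat.le_sub_one_of_lt hgt)).trans
      (hD.prodR_levelLength_le m))).false
  · intro hlen
    rw [hlen]
    exact ⟨hD.prodR_levelLength_le m,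
      lt_of_not_ge (Nat.notMem_of_lt_sInf (Nat.sub_lt hL one_pos))⟩

lemma eq_of_mem_XLevel {m m' : ℕ} {w : List ℕ} (hw : w ∈ XLevel n r R m)
    (hw' : w ∈ XLevel n r R m') : m = m' :=
  hD.levelLength_strictMono.injective
    (((hD.mem_XLevel_iff.mp hw).2).symm.trans (hD.mem_XLevel_iff.mp hw').2)

section Ancestors

variable {m s : ℕ} {x : List ℕ}

lemma ancestor_mem (hx : x ∈ XLevel n r R m) (hs : s ≤ m) :
    ancestor r R s x ∈ XLevel n r R s := by
  obtain ⟨hw, hlen⟩ := hD.mem_XLevel_iff.mp hx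
  refine hD.mem_XLevel_iff.mpr ⟨hw.of_prefix (List.take_prefix _ _), ?_⟩
  rw [ancestor, List.length_take, hlen]
  exact min_eq_left (hD.levelLength_strictMono.monotone hs)

lemma ancestor_self (hx : x ∈ XLevel n r R m) : ancestor r R m x = x := by
  rw [ancestor, ← (hD.mem_XLevel_iff.mp hx).2, List.take_length]

lemma ancestor_ancestor {s' : ℕ} (hs : s ≤ s') (y : List ℕ) :
    ancestor r R s (ancestor r R s' y) = ancestor r R s y := by
  rw [ancestor, ancestor, ancestor, List.take_take,
    min_eq_left (hD.levelLength_strictMono.monotone hs)]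

lemma eq_ancestor_of_prefix {u : List ℕ} (hu : u <+: x) (hus : u ∈ XLevel n r R s) :
    u = ancestor r R s x := by
  rw [ancestor, ← (hD.mem_XLevel_iff.mp hus).2]
  exact List.prefix_iff_eq_take.mp hu

lemma ancestor_eq_of_prefix {u : List ℕ} (hux : u <+: x) (hu : u ∈ XLevel n r R m)
    (hs : s ≤ m) : ancestor r R s u = ancestor r R s x := by
  obtain ⟨t, rfl⟩ := hux
  rw [ancestor, ancestor, List.take_append_of_le_length]
  rw [(hD.mem_XLevel_iff.mp hu).2]
  exact hD.levelLength_strictMono.monotone hs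

lemma isParent_ancestor (hx : x ∈ XLevel n r R m) (hs : s < m) :
    IsParent n r R (ancestor r R s x) (ancestor r R (s + 1) x) := by
  have hlen : ∀ t ≤ m, (ancestor r R t x).length = levelLength r R t := fun t ht =>
    (hD.mem_XLevel_iff.mp (hD.ancestor_mem hx ht)).2
  refine ⟨fun h => ?_, ?_, s + 1, Nat.le_add_left 1 s, hD.ancestor_mem hx hs, ?_⟩
  · have := congrArg List.length h
    rw [hlen s hs.le, hlen (s + 1) hs] at this
    exact (hD.levelLength_strictMono (Nat.lt_succ_self s)).ne this
  · rw [← hD.ancestor_ancestor (Nat.le_succ s) x]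
    exact List.take_prefix _ _
  · exact hD.ancestor_mem hx hs.le

end Ancestors

lemma diam_pos : 0 < diam J := by
  obtain ⟨x₀, hx₀⟩ := hD.int_nonempty
  obtain ⟨ρ, hρ, hball⟩ := Metric.isOpen_iff.mp isOpen_interior x₀ hx₀
  have : Nonempty (Fin d) := ⟨⟨0, hD.dim_pos⟩⟩
  obtain ⟨v, hv⟩ := exists_norm_eq (Pt d) (half_pos hρ).le
  have hmem : ∀ y ∈ ball x₀ ρ, y ∈ J := fun y hy => interior_subset (hball hy)
  have hdist : dist (x₀ + v) x₀ = ρ / 2 := by rw [dist_eq_norm, add_sub_cancel_left, hv]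
  refine (half_pos hρ).trans_le (hdist ▸ dist_le_diam_of_mem hD.compact.isBounded ?_ ?_)
  · exact hmem _ (by rw [mem_ball, hdist]; exact half_lt_self hρ)
  · exact hmem _ (mem_ball_self hρ)

lemma diam_Jset_le {s : ℕ} {w : List ℕ} (hw : w ∈ XLevel n r R s) :
    diam (M.Jset w) ≤ diam J * R ^ s := by
  obtain ⟨hw, hlen⟩ := hD.mem_XLevel_iff.mp hw
  rw [M.diam_Jset hw, mul_comm, hlen]
  exact mul_le_mul_of_nonneg_left (hD.prodR_levelLength_le s) diam_nonneg

/-- The similarity ratio of `J_w` is forced to be `r_1 ⋯ r_k` by the diameter ratios. -/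
lemma exists_ball_subset_interior_Jset :
    ∃ ρ > 0, ∀ w, IsWord n w → ∃ x, ball x (prodR r w.length * ρ) ⊆ interior (M.Jset w) := by
  obtain ⟨x₀, hx₀⟩ := hD.int_nonempty
  obtain ⟨ρ, hρ, hball⟩ := Metric.isOpen_iff.mp isOpen_interior x₀ hx₀
  refine ⟨ρ, hρ, fun w hw => ?_⟩
  obtain ⟨S, c, hc, hS, hSw⟩ := M.similar w hw
  have hratio : c = prodR r w.length := mul_right_cancel₀ hD.diam_pos.ne' <| by
    rw [← diam_image_of_dist_eq_mul hc hS, ← hSw, M.diam_Jset hw]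
  refine ⟨S x₀, interior_maximal ?_ isOpen_ball⟩
  rw [← hratio, ← image_ball_of_dist_eq_mul hc hS, hSw]
  exact Set.image_mono (hball.trans interior_subset)

open SimpleGraph

lemma mem_XLevel_of_horGraph_adj {s : ℕ} {u v : List ℕ} (h : (HorGraph M R).Adj u v)
    (hu : u ∈ XLevel n r R s) : v ∈ XLevel n r R s := by
  obtain ⟨-, m, -, hum, hvm, -⟩ := h
  exact hD.eq_of_mem_XLevel hum hu ▸ hvm

lemma support_subset_XLevel {s : ℕ} {u v : List ℕ} (p : (HorGraph M R).Walk u v)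
    (hu : u ∈ XLevel n r R s) : ∀ w ∈ p.support, w ∈ XLevel n r R s := by
  induction p with
  | nil => simpa using hu
  | cons h p ih =>
    simpa [Walk.support_cons, hu] using ih (hD.mem_XLevel_of_horGraph_adj M h hu)

/-- Pieces shrink along prefixes, so the ancestors of adjacent vertices coincide or intersect. -/
lemma exists_walk_ancestor {s t : ℕ} {u v : List ℕ} (p : (HorGraph M R).Walk u v)
    (hu : u ∈ XLevel n r R s) (ht : t ≤ s) :
    ∃ p' : (HorGraph M R).Walk (ancestor r R t u) (ancestor r R t v),
      p'.length ≤ p.length ∧ ∀ w ∈ p'.support, ∃ w' ∈ p.support, w = ancestor r R t w' := by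
  induction p with
  | nil => exact ⟨Walk.nil, le_rfl, by simp⟩
  | @cons u v v' h p ih =>
    obtain ⟨p', hlen, hsupp⟩ := ih (hD.mem_XLevel_of_horGraph_adj M h hu)
    have hsupp' : ∀ w ∈ p'.support, ∃ w' ∈ (Walk.cons h p).support,
        w = ancestor r R t w' := fun w hw => by
      obtain ⟨w', hw', rfl⟩ := hsupp w hw
      exact ⟨w', List.mem_cons_of_mem _ hw', rfl⟩
    by_cases heq : ancestor r R t u = ancestor r R t v
    · exact ⟨p'.copy heq.symm rfl, by simp; omega, by simpa using hsupp'⟩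
    have hv := hD.mem_XLevel_of_horGraph_adj M h hu
    have hJ (w : List ℕ) (hw : w ∈ XLevel n r R s) : M.Jset w ⊆ M.Jset (ancestor r R t w) :=
      M.Jset_subset_of_prefix (hD.mem_XLevel_iff.mp hw).1 (List.take_prefix _ _)
    have ht1 : 1 ≤ t := Nat.one_le_iff_ne_zero.mpr fun ht0 => heq (by simp [ht0, ancestor_zero])
    obtain ⟨-, -, -, -, -, huv⟩ := id h
    have hadj : (HorGraph M R).Adj (ancestor r R t u) (ancestor r R t v) :=
      ⟨heq, t, ht1, hD.ancestor_mem hu ht, hD.ancestor_mem hv ht,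
        huv.mono (Set.inter_subset_inter (hJ u hu) (hJ v hv))⟩
    refine ⟨Walk.cons hadj p', by simpa using hlen, fun w hw => ?_⟩
    rw [Walk.support_cons, List.mem_cons] at hw
    rcases hw with rfl | hw
    · exact ⟨u, by simp, rfl⟩
    · exact hsupp' w hw

lemma exists_walk_ancestor_of_le {s s' a : ℕ} {x y : List ℕ} (hx : x ∈ XLevel n r R a)
    (hsa : s ≤ a) (p : (HorGraph M R).Walk (ancestor r R s x) (ancestor r R s y))
    (hs' : s' ≤ s) :
    ∃ p' : (HorGraph M R).Walk (ancestor r R s' x) (ancestor r R s' y), p'.length ≤ p.length := by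
  obtain ⟨p', hlen, -⟩ := hD.exists_walk_ancestor M p (hD.ancestor_mem hx hsa) hs'
  exact ⟨p'.copy (hD.ancestor_ancestor hs' x) (hD.ancestor_ancestor hs' y), by simpa using hlen⟩

lemma exists_walk_to_ancestor {m s : ℕ} {x : List ℕ} (hx : x ∈ XLevel n r R m) (hs : s ≤ m) :
    ∃ W : (AugGraph M R).Walk x (ancestor r R s x), W.length = m - s := by
  induction m generalizing x with
  | zero => exact ⟨Walk.nil.copy rfl (Nat.le_zero.mp hs ▸ (hD.ancestor_self hx).symm), by simp⟩
  | succ m ih =>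
    rcases hs.eq_or_lt with rfl | hs
    · exact ⟨Walk.nil.copy rfl (hD.ancestor_self hx).symm, by simp⟩
    have hpar := hD.isParent_ancestor hx (Nat.lt_succ_self m)
    rw [hD.ancestor_self hx] at hpar
    have hadj : (AugGraph M R).Adj x (ancestor r R m x) := Or.inl (Or.inr hpar)
    obtain ⟨W, hW⟩ := ih (hD.ancestor_mem hx m.le_succ) (Nat.le_of_lt_succ hs)
    refine ⟨Walk.cons hadj (W.copy rfl (hD.ancestor_ancestor (Nat.le_of_lt_succ hs) x)), ?_⟩
    simp only [Walk.length_cons, Walk.length_copy, hW]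
    omega

lemma exists_horWalk_of_walk {x y : List ℕ} (W : (AugGraph M R).Walk x y) {a b : ℕ}
    (hx : x ∈ XLevel n r R a) (hy : y ∈ XLevel n r R b) :
    ∃ s ≤ a, s ≤ b ∧ ∃ p : (HorGraph M R).Walk (ancestor r R s x) (ancestor r R s y),
      p.length + (a - s) + (b - s) ≤ W.length := by
  induction W generalizing a with
  | nil =>
    obtain rfl := hD.eq_of_mem_XLevel hx hy
    exact ⟨a, le_rfl, le_rfl, Walk.nil, by simp⟩
  | @cons x x' y h W ih =>
    rw [Walk.length_cons]
    rcases h with (⟨-, hpre, m, hm, hx'm, hxm⟩ | ⟨-, hpre, m, hm, hxm, hx'm⟩) | h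
    · obtain rfl := hD.eq_of_mem_XLevel hx hxm
      obtain ⟨s, hsm, hsb, p, hp⟩ := ih hx'm hy
      by_cases hsa : s ≤ m - 1
      · refine ⟨s, hsa, hsb, p.copy (hD.ancestor_eq_of_prefix hpre hx hsa).symm rfl, ?_⟩
        rw [Walk.length_copy]
        omega
      · -- the horizontal part lay on the level of `x'`: lift it to the level of `x`
        obtain rfl : s = m := by omega
        obtain ⟨p', hp'⟩ := hD.exists_walk_ancestor_of_le M hx'm hsm p (Nat.sub_le s 1)
        have hxx' : ancestor r R (s - 1) x' = ancestor r R (s - 1) x :=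
          (hD.eq_ancestor_of_prefix hpre hxm).symm.trans (hD.ancestor_self hxm).symm
        refine ⟨s - 1, le_rfl, by omega, p'.copy hxx' rfl, ?_⟩
        rw [Walk.length_copy]
        omega
    · obtain rfl := hD.eq_of_mem_XLevel hx hxm
      obtain ⟨s, hsm, hsb, p, hp⟩ := ih hx'm hy
      refine ⟨s, by omega, hsb, p.copy (hD.ancestor_eq_of_prefix hpre hx'm hsm) rfl, ?_⟩
      rw [Walk.length_copy]
      omega
    · obtain ⟨-, m, -, hxm, hx'm, -⟩ := id h
      obtain rfl := hD.eq_of_mem_XLevel hx hxm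
      obtain ⟨s, hsm, hsb, p, hp⟩ := ih hx'm hy
      obtain ⟨p₁, hp₁, -⟩ :=
        hD.exists_walk_ancestor M (Walk.cons (show (HorGraph M R).Adj x x' from h) Walk.nil) hx hsm
      refine ⟨s, hsm, hsb, p₁.append p, ?_⟩
      rw [Walk.length_append]
      simp only [Walk.length_cons, Walk.length_nil] at hp₁
      omega

section GromovProduct

variable {x y : List ℕ} {a b s : ℕ}

lemma dist_le_of_horWalk (hx : x ∈ XLevel n r R a) (hy : y ∈ XLevel n r R b) (hsa : s ≤ a)
    (hsb : s ≤ b) (p : (HorGraph M R).Walk (ancestor r R s x) (ancestor r R s y)) :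
    (AugGraph M R).dist x y ≤ (a - s) + p.length + (b - s) := by
  obtain ⟨Wx, hWx⟩ := hD.exists_walk_to_ancestor M hx hsa
  obtain ⟨Wy, hWy⟩ := hD.exists_walk_to_ancestor M hy hsb
  have := dist_le ((Wx.append (p.mapLe (horGraph_le_augGraph M R))).append Wy.reverse)
  simpa [hWx, hWy] using this

lemma reachable (hx : x ∈ XLevel n r R a) (hy : y ∈ XLevel n r R b) :
    (AugGraph M R).Reachable x y := by
  obtain ⟨Wx, -⟩ := hD.exists_walk_to_ancestor M hx (Nat.zero_le a)
  obtain ⟨Wy, -⟩ := hD.exists_walk_to_ancestor M hy (Nat.zero_le b)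
  rw [ancestor_zero] at Wx Wy
  exact ⟨Wx.append Wy.reverse⟩

lemma dist_nil (hx : x ∈ XLevel n r R a) : (AugGraph M R).dist [] x = a := by
  have hnil : ([] : List ℕ) ∈ XLevel n r R 0 := by simp [XLevel]
  refine le_antisymm ?_ ?_
  · simpa using hD.dist_le_of_horWalk M hnil hx le_rfl (Nat.zero_le a)
      (Walk.nil.copy (ancestor_zero []).symm (ancestor_zero x).symm)
  · obtain ⟨W, hW⟩ := (hD.reachable M hnil hx).exists_walk_length_eq_dist
    obtain ⟨s, hs, -, p, hp⟩ := hD.exists_horWalk_of_walk M W hnil hx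
    omega

lemma gromovD_eq (hx : x ∈ XLevel n r R a) (hy : y ∈ XLevel n r R b) :
    gromovD (AugGraph M R) [] x y = ((a : ℝ) + b - (AugGraph M R).dist x y) / 2 := by
  rw [gromovD, hD.dist_nil M hx, hD.dist_nil M hy]

lemma le_gromovD_of_horWalk (hx : x ∈ XLevel n r R a) (hy : y ∈ XLevel n r R b) (hsa : s ≤ a)
    (hsb : s ≤ b) (p : (HorGraph M R).Walk (ancestor r R s x) (ancestor r R s y)) :
    (s : ℝ) - p.length / 2 ≤ gromovD (AugGraph M R) [] x y := by
  have h : ((AugGraph M R).dist x y : ℝ) ≤ (a - s : ℕ) + p.length + (b - s : ℕ) := by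
    exact_mod_cast hD.dist_le_of_horWalk M hx hy hsa hsb p
  rw [hD.gromovD_eq M hx hy]
  push_cast [hsa, hsb] at h
  linarith

lemma exists_horWalk_gromovD_le (hx : x ∈ XLevel n r R a) (hy : y ∈ XLevel n r R b) :
    ∃ s ≤ a, s ≤ b ∧ ∃ p : (HorGraph M R).Walk (ancestor r R s x) (ancestor r R s y),
      gromovD (AugGraph M R) [] x y + p.length / 2 ≤ s := by
  obtain ⟨W, hW⟩ := (hD.reachable M hx hy).exists_walk_length_eq_dist
  obtain ⟨s, hsa, hsb, p, hp⟩ := hD.exists_horWalk_of_walk M W hx hy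
  refine ⟨s, hsa, hsb, p, ?_⟩
  have h : ((p.length + (a - s) + (b - s) : ℕ) : ℝ) ≤ (AugGraph M R).dist x y := by
    exact_mod_cast hW ▸ hp
  rw [hD.gromovD_eq M hx hy]
  push_cast [hsa, hsb] at h
  linarith

end GromovProduct

lemma Jset_subset_closedBall {s : ℕ} {w : List ℕ} (hw : w ∈ XLevel n r R s) {z : Pt d}
    (hz : z ∈ M.Jset w) : M.Jset w ⊆ closedBall z (diam J * R ^ s) := fun _ hy =>
  (dist_le_diam_of_mem (M.isBounded_Jset hD.compact (hD.mem_XLevel_iff.mp hw).1) hy hz).trans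
    (hD.diam_Jset_le M hw)

lemma Jset_subset_closedBall_of_walk {s : ℕ} {u v : List ℕ} (p : (HorGraph M R).Walk u v)
    (hu : u ∈ XLevel n r R s) {z : Pt d} (hz : z ∈ M.Jset u) :
    ∀ w ∈ p.support, M.Jset w ⊆ closedBall z ((p.length + 1) * (diam J * R ^ s)) := by
  have hscale : 0 ≤ diam J * R ^ s := mul_nonneg diam_nonneg (pow_nonneg hD.R_pos.le s)
  induction p generalizing z with
  | nil => simpa using hD.Jset_subset_closedBall M hu hz
  | cons h p ih =>
    obtain ⟨-, -, -, -, -, z', hzu, hzv⟩ := id h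
    have hv := hD.mem_XLevel_of_horGraph_adj M h hu
    have hzz' : dist z' z ≤ diam J * R ^ s := hD.Jset_subset_closedBall M hu hz hzu
    intro w hw
    rw [Walk.support_cons, List.mem_cons] at hw
    rcases hw with rfl | hw
    · refine (hD.Jset_subset_closedBall M hu hz).trans (closedBall_subset_closedBall ?_)
      simp only [Walk.length_cons, Nat.cast_add, Nat.cast_one]
      nlinarith
    · refine (ih hv hzv w hw).trans (closedBall_subset_closedBall' ?_)
      simp only [Walk.length_cons, Nat.cast_add, Nat.cast_one]
      linarith

lemma card_le_of_Jset_subset_closedBall {ρ : ℝ} (hρ : 0 < ρ) {c : List ℕ → Pt d}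
    (hc : ∀ w, IsWord n w → ball (c w) (prodR r w.length * ρ) ⊆ interior (M.Jset w))
    {s : ℕ} {F : Finset (List ℕ)} (hF : ∀ w ∈ F, w ∈ XLevel n r R s) {z : Pt d}
    (hFz : ∀ w ∈ F, M.Jset w ⊆ closedBall z (2 * diam J * R ^ s)) :
    (F.card : ℝ) ≤ (2 * diam J / (ρ * R)) ^ d := by
  have : Nonempty (Fin d) := ⟨⟨0, hD.dim_pos⟩⟩
  have hR := hD.R_pos
  set ρ' := ρ * R ^ (s + 1)
  have hword (w : List ℕ) (hw : w ∈ F) : IsWord n w ∧ w.length = levelLength r R s :=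
    hD.mem_XLevel_iff.mp (hF w hw)
  have hball (w : List ℕ) (hw : w ∈ F) : ball (c w) ρ' ⊆ interior (M.Jset w) := by
    refine (ball_subset_ball ?_).trans (hc w (hword w hw).1)
    rw [(hword w hw).2, mul_comm (prodR _ _)]
    exact mul_le_mul_of_nonneg_left (hD.pow_succ_lt_prodR_levelLength s).le hρ.le
  have hdisj : (F : Set (List ℕ)).PairwiseDisjoint fun w => ball (c w) ρ' :=
    fun w hw w' hw' hne => (M.disjoint_interior_Jset (hword w hw).1 (hword w' hw').1
      ((hword w hw).2.trans (hword w' hw').2.symm) hne).mono (hball w hw) (hball w' hw')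
  have hpack := card_mul_pow_le_of_pairwiseDisjoint_ball F c (by positivity)
    (by have := hD.diam_pos; positivity) hdisj
    fun w hw => (hball w hw).trans (interior_subset.trans (hFz w hw))
  have hQ : (2 * diam J * R ^ s) ^ d = (2 * diam J / (ρ * R)) ^ d * ρ' ^ d := by
    rw [← mul_pow]
    congr 1
    field_simp
    ring
  rw [finrank_euclideanSpace_fin, hQ] at hpack
  exact le_of_mul_le_mul_right hpack (by positivity)

/-- Volume packing: the projected walk shortens to a path through distinct pieces of level
`s - t`, all inside a ball of radius `2 diam J R^(s - t)`. -/
lemma exists_walk_ancestor_length_le :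
    ∃ K : ℕ, ∀ {s t : ℕ} {u v : List ℕ} (p : (HorGraph M R).Walk u v),
      u ∈ XLevel n r R s → t ≤ s → R ^ t * (p.length + 1) ≤ 1 →
      ∃ p' : (HorGraph M R).Walk (ancestor r R (s - t) u) (ancestor r R (s - t) v),
        p'.length ≤ K := by
  obtain ⟨ρ, hρ, hc⟩ := hD.exists_ball_subset_interior_Jset M
  choose! c hc using hc
  refine ⟨⌈(2 * diam J / (ρ * R)) ^ d⌉₊, fun {s t u v} p hu ht hp => ?_⟩
  have hJ : J.Nonempty := hD.int_nonempty.mono interior_subset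
  have hword (w : List ℕ) (hw : w ∈ XLevel n r R s) : IsWord n w := (hD.mem_XLevel_iff.mp hw).1
  obtain ⟨p₁, -, hsupp⟩ := hD.exists_walk_ancestor M p hu (Nat.sub_le s t)
  obtain ⟨z, hz⟩ := M.Jset_nonempty hJ (hword u hu)
  have hscale : (p.length + 1) * (diam J * R ^ s) ≤ diam J * R ^ (s - t) := by
    rw [← Nat.sub_add_cancel ht, pow_add, Nat.add_sub_cancel]
    have := mul_nonneg (diam_nonneg (s := J)) (pow_nonneg hD.R_pos.le (s - t))
    nlinarith
  have hF (w : List ℕ) (hw : w ∈ p₁.bypass.support.toFinset) :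
      w ∈ XLevel n r R (s - t) ∧ M.Jset w ⊆ closedBall z (2 * diam J * R ^ (s - t)) := by
    obtain ⟨w', hw', rfl⟩ :=
      hsupp w (Walk.support_bypass_subset_support _ (List.mem_toFinset.mp hw))
    have hw's := hD.support_subset_XLevel M p hu w' hw'
    have hmem := hD.ancestor_mem hw's (Nat.sub_le s t)
    obtain ⟨y, hy⟩ := M.Jset_nonempty hJ (hword w' hw's)
    have hyz : dist y z ≤ diam J * R ^ (s - t) :=
      (hD.Jset_subset_closedBall_of_walk M p hu hz w' hw' hy).trans hscale
    refine ⟨hmem, (hD.Jset_subset_closedBall M hmem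
      (M.Jset_subset_of_prefix (hword w' hw's) (List.take_prefix _ _) hy)).trans
      (closedBall_subset_closedBall' ?_)⟩
    linarith
  have hcard := hD.card_le_of_Jset_subset_closedBall M hρ hc (fun w hw => (hF w hw).1)
    fun w hw => (hF w hw).2
  rw [List.toFinset_card_of_nodup (Walk.bypass_isPath _).support_nodup,
    Walk.length_support] at hcard
  have : p₁.bypass.length + 1 ≤ ⌈(2 * diam J / (ρ * R)) ^ d⌉₊ := by
    exact_mod_cast hcard.trans (Nat.le_ceil _)
  exact ⟨p₁.bypass, by omega⟩

lemma exists_scale_gromovD_le :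
    ∃ K c : ℕ, ∀ {x y : List ℕ} {a b : ℕ}, x ∈ XLevel n r R a → y ∈ XLevel n r R b →
      ∃ s ≤ a, s ≤ b ∧ gromovD (AugGraph M R) [] x y ≤ s + c ∧
        ∃ p : (HorGraph M R).Walk (ancestor r R s x) (ancestor r R s y), p.length ≤ K := by
  obtain ⟨K, hK⟩ := hD.exists_walk_ancestor_length_le M
  obtain ⟨c, hc⟩ := exists_pow_mul_succ_le_one hD.R_pos.le hD.R_lt_one
  refine ⟨K, c, fun {x y a b} hx hy => ?_⟩
  obtain ⟨s, hsa, hsb, p, hp⟩ := hD.exists_horWalk_gromovD_le M hx hy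
  obtain ⟨t, ht, htq⟩ := hc p.length
  have htq' : (2 * t : ℝ) ≤ p.length + c := by exact_mod_cast htq
  by_cases hts : t ≤ s
  · obtain ⟨p', hp'⟩ := hK p (hD.ancestor_mem hx hsa) hts ht
    refine ⟨s - t, by omega, by omega, ?_, p'.copy (hD.ancestor_ancestor (s.sub_le t) x)
      (hD.ancestor_ancestor (s.sub_le t) y), by simpa using hp'⟩
    rw [Nat.cast_sub hts]
    linarith
  · refine ⟨0, Nat.zero_le a, Nat.zero_le b, ?_,
      Walk.nil.copy (ancestor_zero x).symm (ancestor_zero y).symm, by simp⟩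
    have : (s : ℝ) < t := by exact_mod_cast Nat.lt_of_not_le hts
    push_cast
    linarith

end MoranData

end MoranPaper

end

/-- the induced augmented tree of a Moran set is Gromov hyperbolic. -/
theorem MoranPaper.statement3 (d : ℕ) (J : Set (MoranPaper.Pt d)) (n : ℕ → ℕ) (r : ℕ → ℝ)
    (R : ℝ) (hD : MoranPaper.MoranData d J n r R) (M : MoranPaper.MoranStructure d J n r) :
    ∃ δ : ℝ, 0 ≤ δ ∧ ∀ x ∈ MoranPaper.XV n r R, ∀ y ∈ MoranPaper.XV n r R,
      ∀ z ∈ MoranPaper.XV n r R,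
      min (MoranPaper.gromovD (MoranPaper.AugGraph M R) [] x z)
          (MoranPaper.gromovD (MoranPaper.AugGraph M R) [] z y) - δ
        ≤ MoranPaper.gromovD (MoranPaper.AugGraph M R) [] x y := by
  obtain ⟨K, c, hK⟩ := hD.exists_scale_gromovD_le M
  refine ⟨c + K, by positivity, fun x hx y hy z hz => ?_⟩
  obtain ⟨a, hx⟩ := Set.mem_iUnion.mp hx
  obtain ⟨b, hy⟩ := Set.mem_iUnion.mp hy
  obtain ⟨e, hz⟩ := Set.mem_iUnion.mp hz
  obtain ⟨s₁, hs₁a, hs₁e, hxz, p₁, hp₁⟩ := hK hx hz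
  obtain ⟨s₂, hs₂e, hs₂b, hzy, p₂, hp₂⟩ := hK hz hy
  obtain ⟨q₁, hq₁⟩ := hD.exists_walk_ancestor_of_le M hx hs₁a p₁ (min_le_left s₁ s₂)
  obtain ⟨q₂, hq₂⟩ := hD.exists_walk_ancestor_of_le M hz hs₂e p₂ (min_le_right s₁ s₂)
  have hxy := hD.le_gromovD_of_horWalk M hx hy ((min_le_left s₁ s₂).trans hs₁a)
    ((min_le_right s₁ s₂).trans hs₂b) (q₁.append q₂)
  have hlen : ((q₁.append q₂).length : ℝ) ≤ 2 * K := by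
    rw [SimpleGraph.Walk.length_append]
    exact_mod_cast (by omega : q₁.length + q₂.length ≤ 2 * K)
  have hmin := (min_le_min hxz hzy).trans_eq (min_add_add_right (s₁ : ℝ) s₂ c)
  rw [← Nat.cast_min] at hmin
  linarith
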